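/- arXiv:math/0503173 — 4 statements merged into one kernel-verified Lean document; each statement's English description precedes it below -/
import Mathlib

section
/- Let α ≥ 1 and let t be a natural number with 2^(α-1) - 1 ≤ t < 2^α - 2. Then the binomial coefficient C(t+1, 2^α - 2 - t) is even. -/
private lemma aux_even_choose : ∀ (a n : ℕ), 2 ^ a ≤ n → n ≤ 2 ^ (a + 1) - 2 →
    2 ∣ Nat.choose n (2 ^ (a + 1) - 1 - n) := by
  intro a
  induction a with
  | zero => intro n h1 h2; omega
  | succ b ih =>
    intro n h1 h2
    haveI : Fact (Nat.Prime 2) := ⟨Nat.prime_two⟩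
    have p0 : 1 ≤ 2 ^ b := Nat.one_le_two_pow
    have p1 : (2:ℕ) ^ (b + 1) = 2 * 2 ^ b := by ring
    have p2 : (2:ℕ) ^ (b + 2) = 4 * 2 ^ b := by ring
    have p2' : (2:ℕ) ^ (b + 1 + 1) = 4 * 2 ^ b := by ring
    rw [p2'] at h2
    set k := 2 ^ (b + 2) - 1 - n with hk
    have hmod := Choose.choose_modEq_choose_mod_mul_choose_div_nat (p := 2) (n := n) (k := k)
    have hnk : n + k = 4 * 2 ^ b - 1 := by omega
    rcases Nat.even_or_odd n with he | ho
    · have hn2 : n % 2 = 0 := Nat.even_iff.mp he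
      have hk2 : k % 2 = 1 := by omega
      rw [Nat.ModEq] at hmod
      rw [hn2, hk2] at hmod
      simp [Nat.choose] at hmod
      omega
    · have hn2 : n % 2 = 1 := Nat.odd_iff.mp ho
      have hk2 : k % 2 = 0 := by omega
      have hIH : 2 ∣ Nat.choose (n / 2) (2 ^ (b + 1) - 1 - n / 2) := by
        apply ih <;> omega
      have hkdiv : k / 2 = 2 ^ (b + 1) - 1 - n / 2 := by omega
      rw [Nat.ModEq] at hmod
      rw [hn2, hk2, hkdiv] at hmod
      simp only [Nat.choose] at hmod
      obtain ⟨c, hc⟩ := hIH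
      omega

theorem stmt_1 (α t : ℕ) (hα : 1 ≤ α) (h1 : 2 ^ (α - 1) - 1 ≤ t) (h2 : t < 2 ^ α - 2) :
    2 ∣ Nat.choose (t + 1) (2 ^ α - 2 - t) := by
  obtain ⟨b, rfl⟩ : ∃ b, α = b + 1 := ⟨α - 1, by omega⟩
  simp only [Nat.add_sub_cancel] at h1
  have h := aux_even_choose b (t + 1) (by omega) (by omega)
  have heq : 2 ^ (b + 1) - 1 - (t + 1) = 2 ^ (b + 1) - 2 - t := by omega
  rwa [heq] at h
end

section
/- Let α ≥ 1 and let t be a natural number with 2^(α-1) - 1 ≤ t < 2^α - 2. Then C(t, 2^α - 2 - t) ≡ C(t, 2^α - 3 - t) (mod 2). -/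
private lemma even_choose_aux (n : ℕ) : ∀ m k : ℕ, m + k = 2 ^ n - 1 → 1 ≤ k → k ≤ m →
    Nat.choose m k % 2 = 0 := by
  induction n with
  | zero => intro m k h hk hkm; omega
  | succ n ih =>
    intro m k h hk hkm
    haveI : Fact (Nat.Prime 2) := ⟨Nat.prime_two⟩
    have hl := (Choose.choose_modEq_choose_mod_mul_choose_div_nat (p := 2) (n := m) (k := k))
    have hpow : 2 ^ (n + 1) = 2 * 2 ^ n := by ring
    have h2n : 1 ≤ 2 ^ n := Nat.one_le_two_pow
    rw [Nat.ModEq] at hl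
    rw [hl, Nat.mul_mod]
    rcases Nat.mod_two_eq_zero_or_one k with hk0 | hk1
    · -- k even, hence m odd
      have hm1 : m % 2 = 1 := by omega
      rw [hm1, hk0]
      have := ih (m / 2) (k / 2) (by omega) (by omega) (by omega)
      simp [this]
    · -- k odd, hence m even
      have hm0 : m % 2 = 0 := by omega
      rw [hm0, hk1]
      simp

theorem stmt_2 (α t : ℕ) (hα : 1 ≤ α) (h1 : 2 ^ (α - 1) - 1 ≤ t) (h2 : t < 2 ^ α - 2) :
    Nat.choose t (2 ^ α - 2 - t) % 2 = Nat.choose t (2 ^ α - 3 - t) % 2 := by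
  have hpow : 2 ^ (α - 1) * 2 = 2 ^ α := by
    rw [← pow_succ]; congr 1; omega
  have h1p : 1 ≤ 2 ^ (α - 1) := Nat.one_le_two_pow
  have hα2 : 4 ≤ 2 ^ α := by omega
  set k := 2 ^ α - 2 - t with hkdef
  have hk1 : 1 ≤ k := by omega
  have hk3 : 2 ^ α - 3 - t = k - 1 := by omega
  have hpascal : Nat.choose (t + 1) k = Nat.choose t (k - 1) + Nat.choose t k := by
    have h := Nat.choose_succ_succ' t (k - 1)
    rwa [show k - 1 + 1 = k by omega] at h
  have heven : Nat.choose (t + 1) k % 2 = 0 :=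
    even_choose_aux α (t + 1) k (by omega) hk1 (by omega)
  rw [hk3]
  omega
end

section
/- Let m ≥ 1, B ≥ 1, and α be natural numbers with 2^α ≥ m + 1. Then for every t with 0 ≤ t < m, the binomial coefficient C(2m + 2^α·B - 2t, m - t) is even. -/
/-!
By `k * C(n, k) = n * C(n - 1, k - 1)`, the number `k * C(n, k)` is divisible by every power of
`p` dividing `n`. If `p^(v_p(k) + 1) ∣ n` and `p ∤ C(n, k)`, this power would divide `k`, which is
absurd. For the theorem, `k = m - t` satisfies `2^(v₂(k)) ≤ k ≤ m < 2^α`, so `2^(v₂(k) + 1)`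
divides both `2k` and `2^α B`, hence their sum, the top entry.
-/

theorem Nat.dvd_mul_choose (n k : ℕ) (hk : k ≠ 0) : n ∣ k * n.choose k := by
  obtain ⟨j, rfl⟩ := Nat.exists_eq_add_one_of_ne_zero hk
  cases n with
  | zero => simp
  | succ n => exact ⟨n.choose j, by rw [Nat.add_one_mul_choose_eq, mul_comm]⟩

theorem Nat.Prime.dvd_choose_of_pow_padicValNat_succ_dvd {p n k : ℕ} (hp : p.Prime) (hk : k ≠ 0)
    (hn : p ^ (padicValNat p k + 1) ∣ n) : p ∣ n.choose k := by
  have := Fact.mk hp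
  by_contra hpC
  have hcop : Nat.Coprime (p ^ (padicValNat p k + 1)) (n.choose k) :=
    ((Nat.Prime.coprime_iff_not_dvd hp).2 hpC).pow_left _
  exact pow_succ_padicValNat_not_dvd hk
    (hcop.dvd_of_dvd_mul_right (hn.trans (Nat.dvd_mul_choose n k hk)))

theorem padicValNat_two_lt_of_lt_two_pow {k α : ℕ} (hk : k ≠ 0) (hkα : k < 2 ^ α) :
    padicValNat 2 k < α :=
  (Nat.pow_lt_pow_iff_right (by norm_num)).1
    ((Nat.le_of_dvd (Nat.pos_of_ne_zero hk) pow_padicValNat_dvd).trans_lt hkα)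

theorem stmt_3_general (m B α : ℕ) (hα : m + 1 ≤ 2 ^ α)
    (t : ℕ) (ht : t < m) :
    2 ∣ Nat.choose (2 * m + 2 ^ α * B - 2 * t) (m - t) := by
  have hk : m - t ≠ 0 := by omega
  have hv : padicValNat 2 (m - t) + 1 ≤ α := padicValNat_two_lt_of_lt_two_pow hk (by omega)
  have htop : 2 * m + 2 ^ α * B - 2 * t = 2 * (m - t) + 2 ^ α * B := by omega
  rw [htop]
  refine Nat.prime_two.dvd_choose_of_pow_padicValNat_succ_dvd hk (dvd_add ?_ ?_)
  · rw [pow_succ']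
    exact mul_dvd_mul_left 2 pow_padicValNat_dvd
  · exact (pow_dvd_pow 2 hv).mul_right B

theorem stmt_3 (m B α : ℕ) (hm : 1 ≤ m) (hB : 1 ≤ B) (hα : m + 1 ≤ 2 ^ α)
    (t : ℕ) (ht : t < m) :
    2 ∣ Nat.choose (2 * m + 2 ^ α * B - 2 * t) (m - t) :=
  stmt_3_general m B α hα t ht
end

section
/- Let m, α, B be natural numbers with B ≥ 1 and 2^α ≥ m + 1, and let R = (ℤ/2)[a, b]/(a^(m+1), b^(m + 2^α B + 1)). Then in R: (1 + a)^(m+1) · (1 + b)^(m + 2^α B + 1) = (1 + a + b) · (1 + a + b + ab)^(m+1) · (1 + a + b)^(2^α B - 1). -/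
open MvPolynomial

/-- The truncated polynomial ring (ℤ/2)[a,b]/(a^(m+1), b^(n+1)). -/
abbrev TruncRing (m n : ℕ) : Type :=
  MvPolynomial (Fin 2) (ZMod 2) ⧸
    Ideal.span {(X 0 : MvPolynomial (Fin 2) (ZMod 2)) ^ (m + 1), (X 1) ^ (n + 1)}

noncomputable def aGen (m n : ℕ) : TruncRing m n := Ideal.Quotient.mk _ (X 0)
noncomputable def bGen (m n : ℕ) : TruncRing m n := Ideal.Quotient.mk _ (X 1)

lemma frob2 {R : Type*} [CommRing R] (h2 : (2 : R) = 0) (x y : R) (n : ℕ) :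
    (x + y) ^ 2 ^ n = x ^ 2 ^ n + y ^ 2 ^ n := by
  induction n with
  | zero => simp
  | succ n ih =>
    rw [pow_succ, pow_mul, pow_mul, pow_mul, ih]
    have h : (x ^ 2 ^ n + y ^ 2 ^ n) ^ 2 =
        (x ^ 2 ^ n) ^ 2 + (y ^ 2 ^ n) ^ 2 + 2 * (x ^ 2 ^ n * y ^ 2 ^ n) := by ring
    rw [h, h2, zero_mul, add_zero]

lemma trunc_two (m n : ℕ) : (2 : TruncRing m n) = 0 := by
  have h := map_ofNat (algebraMap (ZMod 2) (TruncRing m n)) 2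
  rw [← h, show (OfNat.ofNat 2 : ZMod 2) = 0 from rfl, map_zero]

set_option maxHeartbeats 1000000 in
theorem stmt_13 (m α B : ℕ) (hB : 1 ≤ B) (hα : m + 1 ≤ 2 ^ α) :
    let a := aGen m (m + 2 ^ α * B)
    let b := bGen m (m + 2 ^ α * B)
    (1 + a) ^ (m + 1) * (1 + b) ^ (m + 2 ^ α * B + 1) =
      (1 + a + b) * ((1 + a + b + a * b) ^ (m + 1) * (1 + a + b) ^ (2 ^ α * B - 1)) := by
  intro a b
  have h2 := trunc_two m (m + 2 ^ α * B)
  have hpos : 1 ≤ 2 ^ α * B := Nat.one_le_iff_ne_zero.mpr (by positivity)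
  have ha : a ^ (m + 1) = 0 := by
    show (Ideal.Quotient.mk _ (X 0 : MvPolynomial (Fin 2) (ZMod 2))) ^ (m + 1) = 0
    rw [← map_pow, Ideal.Quotient.eq_zero_iff_mem]
    exact Ideal.subset_span (by simp)
  have haP : a ^ 2 ^ α = 0 := pow_eq_zero_of_le hα ha
  have hkey : (1 + a + b) ^ 2 ^ α = (1 + b) ^ 2 ^ α := by
    rw [frob2 h2, frob2 h2, frob2 h2, haP, add_zero]
  have hsplit : (1 + a + b) ^ (2 ^ α * B) = (1 + b) ^ (2 ^ α * B) :=
    calc (1 + a + b) ^ (2 ^ α * B) = ((1 + a + b) ^ 2 ^ α) ^ B := pow_mul _ _ _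
      _ = ((1 + b) ^ 2 ^ α) ^ B := by rw [hkey]
      _ = (1 + b) ^ (2 ^ α * B) := (pow_mul _ _ _).symm
  have hfact : (1 + a + b) ^ (2 ^ α * B) = (1 + a + b) * (1 + a + b) ^ (2 ^ α * B - 1) :=
    calc (1 + a + b) ^ (2 ^ α * B)
        = (1 + a + b) ^ ((2 ^ α * B - 1) + 1) :=
          (congrArg ((1 + a + b) ^ ·) (by omega : 2 ^ α * B = (2 ^ α * B - 1) + 1))
      _ = (1 + a + b) ^ (2 ^ α * B - 1) * (1 + a + b) := pow_succ _ _
      _ = (1 + a + b) * (1 + a + b) ^ (2 ^ α * B - 1) := mul_comm _ _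
  have hexp : (1 + b) ^ (m + 2 ^ α * B + 1) = (1 + b) ^ (m + 1) * (1 + b) ^ (2 ^ α * B) :=
    calc (1 + b) ^ (m + 2 ^ α * B + 1)
        = (1 + b) ^ ((m + 1) + 2 ^ α * B) :=
          (congrArg ((1 + b) ^ ·) (by omega : m + 2 ^ α * B + 1 = (m + 1) + 2 ^ α * B))
      _ = (1 + b) ^ (m + 1) * (1 + b) ^ (2 ^ α * B) := pow_add _ _ _
  calc (1 + a) ^ (m + 1) * (1 + b) ^ (m + 2 ^ α * B + 1)
      = ((1 + a) * (1 + b)) ^ (m + 1) * (1 + b) ^ (2 ^ α * B) := by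
        rw [hexp, mul_pow]; ring
    _ = (1 + a + b + a * b) ^ (m + 1) * ((1 + a + b) * (1 + a + b) ^ (2 ^ α * B - 1)) := by
        rw [← hfact, hsplit, show (1 + a) * (1 + b) = 1 + a + b + a * b by ring]
    _ = (1 + a + b) * ((1 + a + b + a * b) ^ (m + 1) * (1 + a + b) ^ (2 ^ α * B - 1)) := by
        ring
end
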